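/- Define F_n(w) = (1/(2√w))·sqrt(c_n(w)/a_n(w))·sqrt((a_n(w)·c_n(w) − b_n(w)²)/(w·a_n(w)²)). Then for all w > 0 with w ≠ 1, F_n(w) ≤ (1/(2√w))·n/|w − 1|. -/
import Mathlib


open Finset Real

noncomputable def aa (n : ℕ) (w : ℝ) : ℝ := ∑ j ∈ Finset.range (n+1), w ^ j
noncomputable def bb (n : ℕ) (w : ℝ) : ℝ := ∑ j ∈ Finset.range (n+1), (j : ℝ) * w ^ j
noncomputable def cc (n : ℕ) (w : ℝ) : ℝ := ∑ j ∈ Finset.range (n+1), (j : ℝ)^2 * w ^ j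

noncomputable def F (n : ℕ) (w : ℝ) : ℝ :=
  (1 / (2 * Real.sqrt w)) * Real.sqrt (cc n w / aa n w) *
    Real.sqrt ((aa n w * cc n w - (bb n w)^2) / (w * (aa n w)^2))

lemma aa_rel (n : ℕ) (w : ℝ) : (w - 1) * aa n w = w ^ (n+1) - 1 := by
  have := geom_sum_mul w (n+1)
  unfold aa; linarith [this]

lemma bb_rel (n : ℕ) (w : ℝ) :
    (w - 1) * bb n w = (n : ℝ) * w ^ (n+1) - aa n w + 1 := by
  induction n with
  | zero => simp [aa, bb]
  | succ m ih =>
      have hb : bb (m+1) w = bb m w + ((m : ℝ) + 1) * w ^ (m+1) := by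
        unfold bb; rw [Finset.sum_range_succ]; push_cast; ring
      have ha : aa (m+1) w = aa m w + w ^ (m+1) := by
        unfold aa; rw [Finset.sum_range_succ]
      rw [hb, ha]; push_cast; linear_combination ih

lemma cc_rel (n : ℕ) (w : ℝ) :
    (w - 1) * cc n w = (n : ℝ)^2 * w ^ (n+1) - 2 * bb n w + aa n w - 1 := by
  induction n with
  | zero => simp [aa, bb, cc]
  | succ m ih =>
      have hc : cc (m+1) w = cc m w + ((m : ℝ) + 1)^2 * w ^ (m+1) := by
        unfold cc; rw [Finset.sum_range_succ]; push_cast; ring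
      have hb : bb (m+1) w = bb m w + ((m : ℝ) + 1) * w ^ (m+1) := by
        unfold bb; rw [Finset.sum_range_succ]; push_cast; ring
      have ha : aa (m+1) w = aa m w + w ^ (m+1) := by
        unfold aa; rw [Finset.sum_range_succ]
      rw [hc, hb, ha]; push_cast; linear_combination ih

lemma key_identity (n : ℕ) (w : ℝ) (hw1 : w ≠ 1) :
    (w - 1)^2 * (aa n w * cc n w - (bb n w)^2) =
      w * (aa n w)^2 - ((n : ℝ)+1)^2 * w ^ (n+1) := by
  have hd : w - 1 ≠ 0 := sub_ne_zero.mpr hw1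
  have h1 := aa_rel n w
  have h2 := bb_rel n w
  have h3 := cc_rel n w
  set a := aa n w; set b := bb n w; set c := cc n w; set x := w ^ (n+1)
  have ha : a = (x - 1) / (w - 1) := by field_simp; linarith
  have hb : b = ((n : ℝ) * x - a + 1) / (w - 1) := by field_simp; linarith
  have hc : c = ((n : ℝ)^2 * x - 2*b + a - 1) / (w - 1) := by field_simp; linarith
  rw [hc, hb, ha]
  field_simp
  ring

lemma aa_pos (n : ℕ) (w : ℝ) (hw : 0 < w) : 0 < aa n w := by
  unfold aa
  exact Finset.sum_pos (fun j _ => pow_pos hw j) ⟨0, Finset.mem_range.mpr (Nat.succ_pos n)⟩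

theorem stmt8 (n : ℕ) (hn : 1 ≤ n) (w : ℝ) (hw : 0 < w) (hw1 : w ≠ 1) :
    F n w ≤ (1 / (2 * Real.sqrt w)) * n / |w - 1| := by
  have ha := aa_pos n w hw
  have hd : w - 1 ≠ 0 := sub_ne_zero.mpr hw1
  have hK : (0:ℝ) ≤ 1 / (2 * Real.sqrt w) := by positivity
  -- bound 1 : cc/aa ≤ n^2
  have hca : cc n w ≤ (n : ℝ)^2 * aa n w := by
    unfold cc aa
    rw [Finset.mul_sum]
    refine Finset.sum_le_sum (fun j hj => ?_)
    have hjn : (j : ℝ) ≤ n := by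
      exact_mod_cast Nat.lt_succ_iff.mp (Finset.mem_range.mp hj)
    have : (j : ℝ)^2 ≤ (n : ℝ)^2 := by nlinarith [Nat.cast_nonneg (α := ℝ) j]
    nlinarith [pow_pos hw j]
  have hs1 : Real.sqrt (cc n w / aa n w) ≤ (n : ℝ) := by
    have : cc n w / aa n w ≤ ((n : ℝ))^2 := by
      rw [div_le_iff₀ ha]; linarith
    calc Real.sqrt (cc n w / aa n w) ≤ Real.sqrt ((n:ℝ)^2) := Real.sqrt_le_sqrt this
      _ = (n : ℝ) := by rw [Real.sqrt_sq (Nat.cast_nonneg n)]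
  -- bound 2
  have hkey := key_identity n w hw1
  have hx : 0 < w ^ (n+1) := pow_pos hw _
  have h2 : (aa n w * cc n w - (bb n w)^2) / (w * (aa n w)^2) ≤ 1 / (w-1)^2 := by
    rw [div_le_div_iff₀ (by positivity) (by positivity)]
    nlinarith [hkey, hx, sq_nonneg ((n:ℝ)+1), mul_pos (mul_pos hx hx) hx, mul_nonneg (sq_nonneg ((n:ℝ)+1)) hx.le]
  have hs2 : Real.sqrt ((aa n w * cc n w - (bb n w)^2) / (w * (aa n w)^2)) ≤ 1 / |w-1| := by
    calc Real.sqrt ((aa n w * cc n w - (bb n w)^2) / (w * (aa n w)^2))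
        ≤ Real.sqrt (1 / (w-1)^2) := Real.sqrt_le_sqrt h2
      _ = 1 / |w-1| := by
          rw [one_div, Real.sqrt_inv, Real.sqrt_sq_eq_abs, one_div]
  -- combine
  unfold F
  have hs1n : 0 ≤ Real.sqrt (cc n w / aa n w) := Real.sqrt_nonneg _
  have hs2n : 0 ≤ Real.sqrt ((aa n w * cc n w - (bb n w)^2) / (w * (aa n w)^2)) :=
    Real.sqrt_nonneg _
  have habs : 0 < |w - 1| := abs_pos.mpr hd
  calc (1 / (2 * Real.sqrt w)) * Real.sqrt (cc n w / aa n w) *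
        Real.sqrt ((aa n w * cc n w - (bb n w)^2) / (w * (aa n w)^2))
      ≤ (1 / (2 * Real.sqrt w)) * (n : ℝ) * (1 / |w-1|) := by
        apply mul_le_mul _ hs2 hs2n (by positivity)
        exact mul_le_mul_of_nonneg_left hs1 hK
    _ = (1 / (2 * Real.sqrt w)) * n / |w - 1| := by ring
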